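/- arXiv:q-alg/9703018 — 2 statements merged into one kernel-verified Lean document; each statement's English description precedes it below -/
import Mathlib

section
/- There exists an entire function θ : ℂ → ℂ such that θ′(0) = 1, the zero set of θ is exactly L, θ(z+1) = −θ(z) for all z ∈ ℂ, and θ(z+τ) = −e^{−iπτ} e^{−2iπz} θ(z) for all z ∈ ℂ. -/
noncomputable section
open Complex Matrix Kronecker

/-- The lattice `L = ℤ + τℤ`. -/
def LatSet (τ : ℂ) : Set ℂ := {z | ∃ m n : ℤ, z = (m : ℂ) + (n : ℂ) * τ}

/-- `θ` is the theta function of the paper: entire, `θ′(0) = 1`, zero set exactly `L`,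
`θ(z+1) = −θ(z)` and `θ(z+τ) = −e^{−iπτ} e^{−2iπz} θ(z)`. -/
def IsTheta (τ : ℂ) (θ : ℂ → ℂ) : Prop :=
  Differentiable ℂ θ ∧ deriv θ 0 = 1 ∧ (∀ z, θ z = 0 ↔ z ∈ LatSet τ) ∧
    (∀ z, θ (z + 1) = -θ z) ∧
    (∀ z, θ (z + τ) = -Complex.exp (-((Real.pi : ℂ) * Complex.I * τ)) *
      Complex.exp (-(2 * (Real.pi : ℂ) * Complex.I * z)) * θ z)

namespace ThetaAux

open Filter Topology

/-- The partial theta-type product `∏ (1 - q^(n+1) u)`. -/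
def A (q u : ℂ) : ℂ := ∏' n : ℕ, (1 - q ^ (n + 1) * u)

variable {q : ℂ}

lemma factor_ne_zero {x : ℂ} (hx : ‖x‖ < 1) : 1 - x ≠ 0 := by
  intro h
  rw [sub_eq_zero] at h
  rw [← h] at hx
  simp at hx

lemma small_norm (hq : ‖q‖ < 1) {u : ℂ} (hu : ‖q * u‖ ≤ 1 / 2) (n : ℕ) :
    ‖q ^ (n + 1) * u‖ ≤ 1 / 2 * ‖q‖ ^ n := by
  have h : q ^ (n + 1) * u = q ^ n * (q * u) := by ring
  rw [h, norm_mul, norm_pow, mul_comm]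
  exact mul_le_mul hu le_rfl (by positivity) (by norm_num)

lemma small_norm' (hq : ‖q‖ < 1) {u : ℂ} (hu : ‖q * u‖ ≤ 1 / 2) (n : ℕ) :
    ‖q ^ (n + 1) * u‖ ≤ 1 / 2 :=
  (small_norm hq hu n).trans <| by
    have : ‖q‖ ^ n ≤ 1 := pow_le_one₀ (norm_nonneg q) hq.le
    nlinarith

lemma small_lt_one (hq : ‖q‖ < 1) {u : ℂ} (hu : ‖q * u‖ ≤ 1 / 2) (n : ℕ) :
    ‖q ^ (n + 1) * u‖ < 1 :=
  lt_of_le_of_lt (small_norm' hq hu n) (by norm_num)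

lemma logSummable (hq : ‖q‖ < 1) {u : ℂ} (hu : ‖q * u‖ ≤ 1 / 2) :
    Summable fun n : ℕ ↦ Complex.log (1 - q ^ (n + 1) * u) := by
  apply Summable.of_norm
  refine Summable.of_nonneg_of_le (fun n ↦ norm_nonneg _) (fun n ↦ ?_)
    (((summable_geometric_of_lt_one (norm_nonneg q) hq).mul_left (3 / 2 * (1 / 2))))
  calc ‖Complex.log (1 - q ^ (n + 1) * u)‖
      = ‖Complex.log (1 + -(q ^ (n + 1) * u))‖ := by rw [sub_eq_add_neg]
    _ ≤ 3 / 2 * ‖-(q ^ (n + 1) * u)‖ :=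
        Complex.norm_log_one_add_half_le_self (by rw [norm_neg]; exact small_norm' hq hu n)
    _ ≤ 3 / 2 * (1 / 2 * ‖q‖ ^ n) := by
        rw [norm_neg]
        exact mul_le_mul_of_nonneg_left (small_norm hq hu n) (by norm_num)
    _ = 3 / 2 * (1 / 2) * ‖q‖ ^ n := by ring

lemma small_multipliable (hq : ‖q‖ < 1) {u : ℂ} (hu : ‖q * u‖ ≤ 1 / 2) :
    Multipliable fun n : ℕ ↦ (1 - q ^ (n + 1) * u) := by
  have := Complex.multipliable_of_summable_log (logSummable hq hu)
  exact this

lemma small_A_eq_cexp (hq : ‖q‖ < 1) {u : ℂ} (hu : ‖q * u‖ ≤ 1 / 2) :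
    A q u = Complex.exp (∑' n : ℕ, Complex.log (1 - q ^ (n + 1) * u)) := by
  have := Complex.cexp_tsum_eq_tprod
    (fun n ↦ factor_ne_zero (small_lt_one hq hu n))
    (logSummable hq hu)
  exact this.symm

lemma small_A_ne_zero (hq : ‖q‖ < 1) {u : ℂ} (hu : ‖q * u‖ ≤ 1 / 2) : A q u ≠ 0 := by
  rw [small_A_eq_cexp hq hu]
  exact Complex.exp_ne_zero _

lemma exists_small (hq : ‖q‖ < 1) (u : ℂ) : ∃ N : ℕ, ‖q * (q ^ N * u)‖ ≤ 1 / 2 := by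
  have h0 : Tendsto (fun N : ℕ ↦ ‖q‖ ^ N * (‖q‖ * ‖u‖)) atTop (𝓝 (0 * (‖q‖ * ‖u‖))) :=
    (tendsto_pow_atTop_nhds_zero_of_lt_one (norm_nonneg q) hq).mul_const _
  rw [zero_mul] at h0
  obtain ⟨N, hN⟩ := (h0.eventually (eventually_le_nhds (by norm_num : (0:ℝ) < 1/2))).exists
  refine ⟨N, ?_⟩
  calc ‖q * (q ^ N * u)‖ = ‖q‖ ^ N * (‖q‖ * ‖u‖) := by
        rw [norm_mul, norm_mul, norm_pow]; ring
    _ ≤ 1 / 2 := hN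

lemma tail_eq (u : ℂ) (N : ℕ) :
    (fun n : ℕ ↦ 1 - q ^ (n + 1) * (q ^ N * u)) = fun n : ℕ ↦ 1 - q ^ (n + N + 1) * u := by
  funext n
  rw [← mul_assoc, ← pow_add]
  ring_nf

lemma multipliable (hq : ‖q‖ < 1) (u : ℂ) :
    Multipliable fun n : ℕ ↦ (1 - q ^ (n + 1) * u) := by
  obtain ⟨N, hN⟩ := exists_small hq u
  apply Multipliable.comp_nat_add (k := N)
  have h := small_multipliable hq hN
  rw [tail_eq u N] at h
  exact h.congr fun n ↦ by ring_nf

lemma A_split (hq : ‖q‖ < 1) (u : ℂ) (N : ℕ) :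
    A q u = (∏ i ∈ Finset.range N, (1 - q ^ (i + 1) * u)) * A q (q ^ N * u) := by
  have htail : Multipliable fun n : ℕ ↦ 1 - q ^ (n + N + 1) * u := by
    have h := multipliable hq (q ^ N * u)
    rwa [tail_eq u N] at h
  have h := Multipliable.prod_mul_tprod_nat_mul' (f := fun n : ℕ ↦ 1 - q ^ (n + 1) * u) (k := N)
    (htail.congr fun n ↦ by ring_nf)
  rw [A, ← h]
  congr 1
  rw [A, tail_eq u N]

lemma A_eq_zero_iff (hq : ‖q‖ < 1) (u : ℂ) :
    A q u = 0 ↔ ∃ n : ℕ, q ^ (n + 1) * u = 1 := by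
  constructor
  · intro h
    by_contra hc
    push_neg at hc
    obtain ⟨N, hN⟩ := exists_small hq u
    rw [A_split hq u N] at h
    rcases mul_eq_zero.mp h with h1 | h2
    · obtain ⟨i, -, hi⟩ := Finset.prod_eq_zero_iff.mp h1
      exact hc i (by rwa [sub_eq_zero, eq_comm] at hi)
    · exact small_A_ne_zero hq hN h2
  · rintro ⟨n, hn⟩
    have hzero : HasProd (fun n : ℕ ↦ 1 - q ^ (n + 1) * u) 0 := by
      rw [HasProd]
      refine tendsto_const_nhds.congr' ?_
      filter_upwards [eventually_ge_atTop ({n} : Finset ℕ)] with s hs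
      exact (Finset.prod_eq_zero (hs (Finset.mem_singleton_self n))
        (by rw [hn, sub_self])).symm
    exact hzero.tprod_eq

lemma A_ne_zero_of_norm_le_one (hq : ‖q‖ < 1) {u : ℂ} (hu : ‖u‖ ≤ 1) : A q u ≠ 0 := by
  intro h0
  obtain ⟨n, h⟩ := (A_eq_zero_iff hq u).mp h0
  have : ‖q ^ (n + 1) * u‖ < 1 := by
    rw [norm_mul, norm_pow]
    calc ‖q‖ ^ (n + 1) * ‖u‖ ≤ ‖q‖ ^ (n + 1) * 1 :=
          mul_le_mul_of_nonneg_left hu (by positivity)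
      _ = ‖q‖ ^ (n + 1) := mul_one _
      _ ≤ ‖q‖ ^ 1 := pow_le_pow_of_le_one (norm_nonneg q) hq.le (by omega)
      _ < 1 := by rwa [pow_one]
  rw [h] at this
  simp at this

lemma A_shift (hq : ‖q‖ < 1) (u : ℂ) : A q u = (1 - q * u) * A q (q * u) := by
  have h1 : Multipliable fun n : ℕ ↦ (1 - q ^ (n + 1 + 1) * u) := by
    have h := multipliable hq (q * u)
    refine h.congr fun n ↦ ?_
    rw [← mul_assoc, ← pow_succ]
  have h := tprod_eq_zero_mul' (f := fun n : ℕ ↦ 1 - q ^ (n + 1) * u) h1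
  rw [A, h]
  congr 1
  · norm_num
  · rw [A]
    apply tprod_congr
    intro n
    rw [← mul_assoc, ← pow_succ]

lemma A_differentiable (hq : ‖q‖ < 1) : Differentiable ℂ (A q) := by
  intro u₀
  set R : ℝ := ‖u₀‖ + 1 with hR
  have hR0 : 0 < R := by positivity
  obtain ⟨N, hN⟩ : ∃ N : ℕ, ‖q‖ ^ (N + 1) * R ≤ 1 / 2 := by
    have h0 : Tendsto (fun N : ℕ ↦ ‖q‖ ^ (N + 1) * R) atTop (𝓝 (0 * R)) :=
      (((tendsto_pow_atTop_nhds_zero_of_lt_one (norm_nonneg q) hq).comp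
        (tendsto_add_atTop_nat 1))).mul_const _
    rw [zero_mul] at h0
    exact (h0.eventually (eventually_le_nhds (by norm_num : (0:ℝ) < 1/2))).exists
  -- key smallness on the ball
  have hsmall : ∀ u ∈ Metric.ball (0:ℂ) R, ∀ n : ℕ, ‖q ^ (n + N + 1) * u‖ ≤ 1 / 2 * ‖q‖ ^ n := by
    intro u hu n
    rw [Metric.mem_ball, dist_zero_right] at hu
    have heq : ‖q ^ (n + N + 1) * u‖ = ‖q‖ ^ n * (‖q‖ ^ (N + 1) * ‖u‖) := by
      rw [norm_mul, norm_pow]; ring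
    rw [heq]
    have h1 : ‖q‖ ^ (N + 1) * ‖u‖ ≤ ‖q‖ ^ (N + 1) * R :=
      mul_le_mul_of_nonneg_left hu.le (by positivity)
    calc ‖q‖ ^ n * (‖q‖ ^ (N + 1) * ‖u‖) ≤ ‖q‖ ^ n * (1 / 2) :=
          mul_le_mul_of_nonneg_left (h1.trans hN) (by positivity)
      _ = 1 / 2 * ‖q‖ ^ n := by ring
  have hsmall' : ∀ u ∈ Metric.ball (0:ℂ) R, ‖q * (q ^ N * u)‖ ≤ 1 / 2 := by
    intro u hu
    have h0 := hsmall u hu 0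
    calc ‖q * (q ^ N * u)‖ = ‖q ^ (0 + N + 1) * u‖ := by
          rw [show q * (q ^ N * u) = q ^ (0 + N + 1) * u from by ring]
      _ ≤ 1 / 2 * ‖q‖ ^ 0 := h0
      _ = 1 / 2 := by norm_num
  -- the tail sum of logs is differentiable on the ball
  have hlogdiff : DifferentiableOn ℂ
      (fun u : ℂ ↦ ∑' n : ℕ, Complex.log (1 - q ^ (n + N + 1) * u))
      (Metric.ball (0:ℂ) R) := by
    apply differentiableOn_tsum_of_summable_norm
      (u := fun n : ℕ ↦ 3 / 2 * (1 / 2 * ‖q‖ ^ n))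
    · exact ((summable_geometric_of_lt_one (norm_nonneg q) hq).mul_left (1/2)).mul_left (3/2)
    · intro n
      intro u hu
      apply DifferentiableAt.differentiableWithinAt
      apply DifferentiableAt.clog
      · exact (differentiableAt_const _).sub ((differentiableAt_const _).mul differentiableAt_id)
      · rw [Complex.mem_slitPlane_iff]
        left
        have hb : ‖q ^ (n + N + 1) * u‖ ≤ 1 / 2 := by
          refine (hsmall u hu n).trans ?_
          have hqn : ‖q‖ ^ n ≤ 1 := pow_le_one₀ (norm_nonneg q) hq.le
          linarith
        have hre : |(q ^ (n + N + 1) * u).re| ≤ 1 / 2 :=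
          le_trans (Complex.abs_re_le_norm _) hb
        simp only [Complex.sub_re, Complex.one_re]
        linarith [(abs_le.mp hre).2]
    · exact Metric.isOpen_ball
    · intro n u hu
      calc ‖Complex.log (1 - q ^ (n + N + 1) * u)‖
          = ‖Complex.log (1 + -(q ^ (n + N + 1) * u))‖ := by rw [sub_eq_add_neg]
        _ ≤ 3 / 2 * ‖-(q ^ (n + N + 1) * u)‖ := by
            apply Complex.norm_log_one_add_half_le_self
            rw [norm_neg]
            refine (hsmall u hu n).trans ?_
            have : ‖q‖ ^ n ≤ 1 := pow_le_one₀ (norm_nonneg q) hq.le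
            nlinarith
        _ ≤ 3 / 2 * (1 / 2 * ‖q‖ ^ n) := by
            rw [norm_neg]
            exact mul_le_mul_of_nonneg_left (hsmall u hu n) (by norm_num)
  -- A agrees with a differentiable function on the ball
  have heq : ∀ u ∈ Metric.ball (0:ℂ) R,
      A q u = (∏ i ∈ Finset.range N, (1 - q ^ (i + 1) * u)) *
        Complex.exp (∑' n : ℕ, Complex.log (1 - q ^ (n + N + 1) * u)) := by
    intro u hu
    rw [A_split hq u N, small_A_eq_cexp hq (hsmall' u hu)]
    congr 1
    congr 1
    apply tsum_congr
    intro n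
    rw [← mul_assoc, ← pow_add]
    ring_nf
  have hdiff : DifferentiableOn ℂ
      (fun u ↦ (∏ i ∈ Finset.range N, (1 - q ^ (i + 1) * u)) *
        Complex.exp (∑' n : ℕ, Complex.log (1 - q ^ (n + N + 1) * u)))
      (Metric.ball (0:ℂ) R) := by
    apply DifferentiableOn.mul
    · apply DifferentiableOn.fun_finsetProd
      intro i _
      exact ((differentiable_const _).sub ((differentiable_const _).mul differentiable_id)).differentiableOn
    · exact hlogdiff.cexp
  have : DifferentiableOn ℂ (A q) (Metric.ball (0:ℂ) R) :=
    (hdiff.congr heq)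
  have hu₀ : u₀ ∈ Metric.ball (0:ℂ) R := by
    rw [Metric.mem_ball, dist_zero_right, hR]
    linarith
  exact (this.differentiableAt (Metric.isOpen_ball.mem_nhds hu₀))

section Theta

lemma two_pi_I_ne_zero : (2 * (Real.pi : ℂ) * I) ≠ 0 :=
  mul_ne_zero (mul_ne_zero two_ne_zero (by exact_mod_cast Real.pi_ne_zero)) I_ne_zero

lemma exp_two_pi_eq_one_iff (a : ℂ) :
    cexp (2 * (Real.pi : ℂ) * I * a) = 1 ↔ ∃ m : ℤ, a = m := by
  rw [Complex.exp_eq_one_iff]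
  constructor
  · rintro ⟨n, hn⟩
    refine ⟨n, mul_left_cancel₀ two_pi_I_ne_zero ?_⟩
    rw [hn]; ring
  · rintro ⟨m, rfl⟩
    exact ⟨m, by ring⟩

lemma norm_q_lt_one {τ : ℂ} (hτ : 0 < τ.im) : ‖cexp (2 * (Real.pi : ℂ) * I * τ)‖ < 1 := by
  rw [Complex.norm_exp, Real.exp_lt_one_iff]
  have : (2 * (Real.pi : ℂ) * I * τ).re = -(2 * Real.pi * τ.im) := by
    simp [Complex.mul_re, Complex.mul_im]
    try ring
  rw [this]
  have := Real.pi_pos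
  nlinarith

lemma pow_q_mul (τ z : ℂ) (k : ℕ) :
    (cexp (2 * (Real.pi : ℂ) * I * τ)) ^ k * cexp (2 * (Real.pi : ℂ) * I * z) =
      cexp (2 * (Real.pi : ℂ) * I * ((k : ℂ) * τ + z)) := by
  rw [← Complex.exp_nat_mul, ← Complex.exp_add]
  congr 1
  ring

/-- unnormalized theta function -/
def theta0 (τ z : ℂ) : ℂ :=
  cexp (-((Real.pi : ℂ) * I * z)) * (1 - cexp (2 * (Real.pi : ℂ) * I * z)) *
    A (cexp (2 * (Real.pi : ℂ) * I * τ)) (cexp (2 * (Real.pi : ℂ) * I * z)) *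
    A (cexp (2 * (Real.pi : ℂ) * I * τ)) (cexp (-(2 * (Real.pi : ℂ) * I * z)))

lemma theta0_differentiable {τ : ℂ} (hτ : 0 < τ.im) : Differentiable ℂ (theta0 τ) := by
  have hq := norm_q_lt_one hτ
  have h1 : Differentiable ℂ (fun z : ℂ ↦ cexp (2 * (Real.pi : ℂ) * I * z)) :=
    Complex.differentiable_exp.comp (differentiable_id.const_mul _)
  have h2 : Differentiable ℂ (fun z : ℂ ↦ cexp (-(2 * (Real.pi : ℂ) * I * z))) :=
    Complex.differentiable_exp.comp (differentiable_id.const_mul _).neg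
  have h3 : Differentiable ℂ (fun z : ℂ ↦ cexp (-((Real.pi : ℂ) * I * z))) :=
    Complex.differentiable_exp.comp (differentiable_id.const_mul _).neg
  exact ((h3.mul ((differentiable_const _).sub h1)).mul
    ((A_differentiable hq).comp h1)).mul ((A_differentiable hq).comp h2)

lemma theta0_add_one (τ z : ℂ) : theta0 τ (z + 1) = -theta0 τ z := by
  unfold theta0
  have e1 : cexp (-((Real.pi : ℂ) * I * (z + 1))) =
      cexp (-((Real.pi : ℂ) * I * z)) * cexp (-((Real.pi : ℂ) * I)) := by
    rw [← Complex.exp_add]; congr 1; ring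
  have e1' : cexp (-((Real.pi : ℂ) * I)) = -1 := by
    rw [Complex.exp_neg, Complex.exp_pi_mul_I]
    norm_num
  have e2 : cexp (2 * (Real.pi : ℂ) * I * (z + 1)) = cexp (2 * (Real.pi : ℂ) * I * z) := by
    rw [show 2 * (Real.pi : ℂ) * I * (z + 1) = 2 * (Real.pi : ℂ) * I * z + 2 * (Real.pi : ℂ) * I
      from by ring, Complex.exp_add, Complex.exp_two_pi_mul_I, mul_one]
  have e3 : cexp (-(2 * (Real.pi : ℂ) * I * (z + 1))) =
      cexp (-(2 * (Real.pi : ℂ) * I * z)) := by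
    rw [show -(2 * (Real.pi : ℂ) * I * (z + 1)) =
      -(2 * (Real.pi : ℂ) * I * z) + -(2 * (Real.pi : ℂ) * I) from by ring, Complex.exp_add,
      Complex.exp_neg, Complex.exp_neg, Complex.exp_two_pi_mul_I, inv_one, mul_one]
  rw [e1, e1', e2, e3]
  ring

lemma theta0_add_tau {τ : ℂ} (hτ : 0 < τ.im) (z : ℂ) :
    theta0 τ (z + τ) = -cexp (-((Real.pi : ℂ) * I * τ)) *
      cexp (-(2 * (Real.pi : ℂ) * I * z)) * theta0 τ z := by
  have hq := norm_q_lt_one hτ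
  set q : ℂ := cexp (2 * (Real.pi : ℂ) * I * τ) with hqdef
  set w : ℂ := cexp (2 * (Real.pi : ℂ) * I * z) with hwdef
  have hw0 : w ≠ 0 := Complex.exp_ne_zero _
  have hq0 : q ≠ 0 := Complex.exp_ne_zero _
  unfold theta0
  have e1 : cexp (-((Real.pi : ℂ) * I * (z + τ))) =
      cexp (-((Real.pi : ℂ) * I * z)) * cexp (-((Real.pi : ℂ) * I * τ)) := by
    rw [← Complex.exp_add]; congr 1; ring
  have e2 : cexp (2 * (Real.pi : ℂ) * I * (z + τ)) = q * w := by
    rw [hqdef, hwdef, ← Complex.exp_add]; congr 1; ring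
  have e3 : cexp (-(2 * (Real.pi : ℂ) * I * (z + τ))) = q⁻¹ * w⁻¹ := by
    rw [show -(2 * (Real.pi : ℂ) * I * (z + τ)) =
      -(2 * (Real.pi : ℂ) * I * τ) + -(2 * (Real.pi : ℂ) * I * z) from by ring,
      Complex.exp_add, Complex.exp_neg, Complex.exp_neg, hqdef, hwdef]
  have e4 : cexp (-(2 * (Real.pi : ℂ) * I * z)) = w⁻¹ := by
    rw [Complex.exp_neg, hwdef]
  rw [e1, e2, e3, e4]
  have shift1 : A q w = (1 - q * w) * A q (q * w) := A_shift hq w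
  have shift2 : A q (q⁻¹ * w⁻¹) = (1 - w⁻¹) * A q w⁻¹ := by
    have := A_shift hq (q⁻¹ * w⁻¹)
    rwa [show q * (q⁻¹ * w⁻¹) = w⁻¹ from by field_simp] at this
  rw [shift1, shift2]
  simp only [← hqdef, ← hwdef]
  clear_value q w
  field_simp
  ring

/-- The lattice `L = ℤ + τℤ`. (local copy for aux lemmas) -/
def LatSet' (τ : ℂ) : Set ℂ := {z | ∃ m n : ℤ, z = (m : ℂ) + (n : ℂ) * τ}

lemma theta0_eq_zero_iff {τ : ℂ} (hτ : 0 < τ.im) (z : ℂ) :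
    theta0 τ z = 0 ↔ z ∈ LatSet' τ := by
  have hq := norm_q_lt_one hτ
  set q : ℂ := cexp (2 * (Real.pi : ℂ) * I * τ) with hqdef
  set w : ℂ := cexp (2 * (Real.pi : ℂ) * I * z) with hwdef
  have hw' : cexp (-(2 * (Real.pi : ℂ) * I * z)) = cexp (2 * (Real.pi : ℂ) * I * (-z)) := by
    congr 1; ring
  have hz0 : theta0 τ z = 0 ↔
      (1 - w = 0 ∨ (∃ n : ℕ, q ^ (n + 1) * w = 1) ∨
        (∃ n : ℕ, q ^ (n + 1) * cexp (2 * (Real.pi : ℂ) * I * (-z)) = 1)) := by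
    rw [theta0, hw', mul_eq_zero, mul_eq_zero, mul_eq_zero]
    simp only [Complex.exp_ne_zero, false_or, A_eq_zero_iff hq, ← hqdef, ← hwdef]
    tauto
  rw [hz0]
  constructor
  · rintro (h | ⟨n, h⟩ | ⟨n, h⟩)
    · rw [sub_eq_zero, eq_comm, hwdef, exp_two_pi_eq_one_iff] at h
      obtain ⟨m, hm⟩ := h
      exact ⟨m, 0, by rw [hm]; push_cast; ring⟩
    · rw [hqdef, hwdef, pow_q_mul, exp_two_pi_eq_one_iff] at h
      obtain ⟨m, hm⟩ := h
      refine ⟨m, -(n + 1 : ℤ), ?_⟩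
      push_cast
      push_cast at hm
      linear_combination hm
    · rw [hqdef, pow_q_mul, exp_two_pi_eq_one_iff] at h
      obtain ⟨m, hm⟩ := h
      refine ⟨-m, (n + 1 : ℤ), ?_⟩
      push_cast
      push_cast at hm
      linear_combination -hm
  · rintro ⟨m, n, rfl⟩
    rcases lt_trichotomy n 0 with h | h | h
    · refine Or.inr (Or.inl ⟨(-n - 1).toNat, ?_⟩)
      rw [hqdef, hwdef, pow_q_mul, exp_two_pi_eq_one_iff]
      refine ⟨m, ?_⟩
      push_cast
      have hnn : (((-n - 1).toNat : ℕ) : ℂ) = -(n : ℂ) - 1 := by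
        exact_mod_cast congrArg (Int.cast : ℤ → ℂ) (Int.toNat_of_nonneg (show (0:ℤ) ≤ -n - 1 by omega))
      rw [hnn]
      ring
    · subst h
      refine Or.inl ?_
      rw [sub_eq_zero, eq_comm, hwdef, exp_two_pi_eq_one_iff]
      exact ⟨m, by push_cast; ring⟩
    · refine Or.inr (Or.inr ⟨(n - 1).toNat, ?_⟩)
      rw [hqdef, pow_q_mul, exp_two_pi_eq_one_iff]
      refine ⟨-m, ?_⟩
      push_cast
      have hnn : (((n - 1).toNat : ℕ) : ℂ) = (n : ℂ) - 1 := by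
        exact_mod_cast congrArg (Int.cast : ℤ → ℂ) (Int.toNat_of_nonneg (show (0:ℤ) ≤ n - 1 by omega))
      rw [hnn]
      ring

lemma theta0_hasDerivAt {τ : ℂ} (hτ : 0 < τ.im) :
    HasDerivAt (theta0 τ)
      ((-((Real.pi : ℂ) * I) - (Real.pi : ℂ) * I) *
        (A (cexp (2 * (Real.pi : ℂ) * I * τ)) 1 * A (cexp (2 * (Real.pi : ℂ) * I * τ)) 1)) 0 := by
  have hq := norm_q_lt_one hτ
  set q : ℂ := cexp (2 * (Real.pi : ℂ) * I * τ) with hqdef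
  -- rewrite theta0 as H * G
  have hfun : theta0 τ = fun z ↦ (cexp (-((Real.pi : ℂ) * I * z)) - cexp ((Real.pi : ℂ) * I * z)) *
      (A q (cexp (2 * (Real.pi : ℂ) * I * z)) * A q (cexp (-(2 * (Real.pi : ℂ) * I * z)))) := by
    funext z
    rw [theta0]
    have : cexp (-((Real.pi : ℂ) * I * z)) * cexp (2 * (Real.pi : ℂ) * I * z) =
        cexp ((Real.pi : ℂ) * I * z) := by
      rw [← Complex.exp_add]; congr 1; ring
    rw [mul_sub, mul_one, this]
    ring
  rw [hfun]
  have h1 : Differentiable ℂ (fun z : ℂ ↦ cexp (2 * (Real.pi : ℂ) * I * z)) :=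
    Complex.differentiable_exp.comp (differentiable_id.const_mul _)
  have h2 : Differentiable ℂ (fun z : ℂ ↦ cexp (-(2 * (Real.pi : ℂ) * I * z))) :=
    Complex.differentiable_exp.comp (differentiable_id.const_mul _).neg
  have hG : DifferentiableAt ℂ (fun z : ℂ ↦
      A q (cexp (2 * (Real.pi : ℂ) * I * z)) * A q (cexp (-(2 * (Real.pi : ℂ) * I * z)))) 0 :=
    (((A_differentiable hq).comp h1).mul ((A_differentiable hq).comp h2)) 0
  have hH : HasDerivAt (fun z : ℂ ↦ cexp (-((Real.pi : ℂ) * I * z)) - cexp ((Real.pi : ℂ) * I * z))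
      (-((Real.pi : ℂ) * I) - (Real.pi : ℂ) * I) 0 := by
    have ha : HasDerivAt (fun z : ℂ ↦ (Real.pi : ℂ) * I * z) ((Real.pi : ℂ) * I) 0 := by
      simpa using (hasDerivAt_id (0:ℂ)).const_mul ((Real.pi : ℂ) * I)
    have hb := (ha.neg.cexp).sub ha.cexp
    simp at hb
    exact hb
  have := hH.mul hG.hasDerivAt
  simp at this
  exact this

lemma theta0_deriv_ne_zero {τ : ℂ} (hτ : 0 < τ.im) :
    (-((Real.pi : ℂ) * I) - (Real.pi : ℂ) * I) *
      (A (cexp (2 * (Real.pi : ℂ) * I * τ)) 1 * A (cexp (2 * (Real.pi : ℂ) * I * τ)) 1) ≠ 0 := by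
  have hq := norm_q_lt_one hτ
  have hA : A (cexp (2 * (Real.pi : ℂ) * I * τ)) 1 ≠ 0 :=
    A_ne_zero_of_norm_le_one hq (by norm_num)
  refine mul_ne_zero ?_ (mul_ne_zero hA hA)
  have hpi : ((Real.pi : ℂ)) ≠ 0 := by exact_mod_cast Real.pi_ne_zero
  have : -((Real.pi : ℂ) * I) - (Real.pi : ℂ) * I = -(2 * ((Real.pi : ℂ) * I)) := by ring
  rw [this]
  simpa using mul_ne_zero hpi I_ne_zero

end Theta

end ThetaAux


/-- Existence of the theta function: an entire function with `θ′(0) = 1`, zero set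
exactly `L = ℤ + τℤ`, `θ(z+1) = −θ(z)` and `θ(z+τ) = −e^{−iπτ}e^{−2iπz}θ(z)`. -/
theorem theta_exists (τ : ℂ) (hτ : 0 < τ.im) : ∃ θ : ℂ → ℂ, IsTheta τ θ := by
  classical
  set d : ℂ := (-((Real.pi : ℂ) * I) - (Real.pi : ℂ) * I) *
    (ThetaAux.A (cexp (2 * (Real.pi : ℂ) * I * τ)) 1 *
      ThetaAux.A (cexp (2 * (Real.pi : ℂ) * I * τ)) 1) with hd
  have hdz : d ≠ 0 := by rw [hd]; exact ThetaAux.theta0_deriv_ne_zero hτ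
  refine ⟨fun z ↦ d⁻¹ * ThetaAux.theta0 τ z, ?_, ?_, ?_, ?_, ?_⟩
  · exact (ThetaAux.theta0_differentiable hτ).const_mul d⁻¹
  · have h := HasDerivAt.const_mul d⁻¹ (ThetaAux.theta0_hasDerivAt hτ)
    rw [h.deriv, ← hd]
    exact inv_mul_cancel₀ hdz
  · intro z
    rw [mul_eq_zero, or_iff_right (inv_ne_zero hdz)]
    exact ThetaAux.theta0_eq_zero_iff hτ z
  · intro z
    show d⁻¹ * ThetaAux.theta0 τ (z + 1) = -(d⁻¹ * ThetaAux.theta0 τ z)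
    rw [ThetaAux.theta0_add_one]
    ring
  · intro z
    show d⁻¹ * ThetaAux.theta0 τ (z + τ) =
      -Complex.exp (-((Real.pi : ℂ) * Complex.I * τ)) *
        Complex.exp (-(2 * (Real.pi : ℂ) * Complex.I * z)) * (d⁻¹ * ThetaAux.theta0 τ z)
    rw [ThetaAux.theta0_add_tau hτ]
    ring
end
end

section
/- If θ₁ and θ₂ are entire functions on ℂ, each satisfying: derivative 1 at 0, zero set exactly L, θ(z+1) = −θ(z) for all z, and θ(z+τ) = −e^{−iπτ} e^{−2iπz} θ(z) for all z, then θ₁ = θ₂. -/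
noncomputable section
open Complex Matrix Kronecker

open Filter Topology Set Bornology

namespace ThetaUnique

/-- The multiplier in the `τ`-quasiperiodicity. -/
def g (τ z : ℂ) : ℂ :=
  -Complex.exp (-((Real.pi : ℂ) * Complex.I * τ)) *
    Complex.exp (-(2 * (Real.pi : ℂ) * Complex.I * z))

lemma g_ne_zero (τ z : ℂ) : g τ z ≠ 0 := by
  simp [g, Complex.exp_ne_zero]

lemma zero_mem_lat (τ : ℂ) : (0 : ℂ) ∈ LatSet τ := ⟨0, 0, by simp⟩

lemma lat_add_one_iff {τ z : ℂ} : z + 1 ∈ LatSet τ ↔ z ∈ LatSet τ := by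
  constructor
  · rintro ⟨m, n, hz⟩
    exact ⟨m - 1, n, by push_cast; linear_combination hz⟩
  · rintro ⟨m, n, rfl⟩
    exact ⟨m + 1, n, by push_cast; ring⟩

lemma lat_add_tau_iff {τ z : ℂ} : z + τ ∈ LatSet τ ↔ z ∈ LatSet τ := by
  constructor
  · rintro ⟨m, n, hz⟩
    exact ⟨m, n - 1, by push_cast; linear_combination hz⟩
  · rintro ⟨m, n, rfl⟩
    exact ⟨m, n + 1, by push_cast; ring⟩

lemma hasDerivAt_g (τ z : ℂ) :
    HasDerivAt (g τ) (g τ z * (-(2 * (Real.pi : ℂ) * Complex.I))) z := by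
  have h1 : HasDerivAt (fun w : ℂ => -(2 * (Real.pi : ℂ) * Complex.I * w))
      (-(2 * (Real.pi : ℂ) * Complex.I)) z := by
    simpa using ((hasDerivAt_id z).const_mul (-(2 * (Real.pi : ℂ) * Complex.I)))
  have h2 := h1.cexp
  have h3 := h2.const_mul (-Complex.exp (-((Real.pi : ℂ) * Complex.I * τ)))
  refine HasDerivAt.congr_deriv (f := g τ) h3 ?_
  simp [g]; ring

lemma deriv_add_one {τ : ℂ} {θ : ℂ → ℂ} (hθ : IsTheta τ θ) (z : ℂ) :
    deriv θ (z + 1) = -deriv θ z := by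
  have h : (fun w => θ (w + 1)) = fun w => -θ w := funext hθ.2.2.2.1
  rw [← deriv_comp_add_const θ 1 z, h, deriv.fun_neg]

lemma deriv_add_tau {τ : ℂ} {θ : ℂ → ℂ} (hθ : IsTheta τ θ) (z : ℂ) (hz : θ z = 0) :
    deriv θ (z + τ) = g τ z * deriv θ z := by
  have h : (fun w => θ (w + τ)) = fun w => g τ w * θ w := funext hθ.2.2.2.2
  have h2 : HasDerivAt (fun w => g τ w * θ w)
      (g τ z * (-(2 * (Real.pi : ℂ) * Complex.I)) * θ z + g τ z * deriv θ z) z :=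
    (hasDerivAt_g τ z).mul (hθ.1 z).hasDerivAt
  rw [← deriv_comp_add_const θ τ z, h, h2.deriv, hz, mul_zero, zero_add]

lemma deriv_ne_zero_lat {τ : ℂ} {θ : ℂ → ℂ} (hθ : IsTheta τ θ) {z : ℂ}
    (hz : z ∈ LatSet τ) : deriv θ z ≠ 0 := by
  obtain ⟨m, n, rfl⟩ := hz
  induction n using Int.induction_on generalizing m with
  | zero =>
    induction m using Int.induction_on with
    | zero => simpa using hθ.2.1 ▸ one_ne_zero
    | succ m ih =>
      have e : ((m + 1 : ℤ) : ℂ) + (0 : ℤ) * τ = ((m : ℂ) + ((0 : ℤ) : ℂ) * τ) + 1 := by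
        push_cast; ring
      rw [e, deriv_add_one hθ]
      exact neg_ne_zero.mpr ih
    | pred m ih =>
      have e : ((-(m:ℤ) : ℤ) : ℂ) + ((0 : ℤ) : ℂ) * τ
          = (((-(m:ℤ) - 1 : ℤ) : ℂ) + ((0 : ℤ) : ℂ) * τ) + 1 := by
        push_cast; ring
      rw [e, deriv_add_one hθ, neg_ne_zero] at ih
      exact ih
  | succ n ih =>
    have e : ((m : ℤ) : ℂ) + ((n + 1 : ℤ) : ℂ) * τ = (((m : ℤ) : ℂ) + ((n : ℤ) : ℂ) * τ) + τ := by
      push_cast; ring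
    have hlat : ((m : ℤ) : ℂ) + ((n : ℤ) : ℂ) * τ ∈ LatSet τ := ⟨m, n, rfl⟩
    rw [e, deriv_add_tau hθ _ ((hθ.2.2.1 _).mpr hlat)]
    exact mul_ne_zero (g_ne_zero τ _) (ih m)
  | pred n ih =>
    have e : ((m : ℤ) : ℂ) + ((-n : ℤ) : ℂ) * τ = (((m : ℤ) : ℂ) + ((-n - 1 : ℤ) : ℂ) * τ) + τ := by
      push_cast; ring
    have hlat : ((m : ℤ) : ℂ) + ((-n : ℤ) : ℂ) * τ ∈ LatSet τ := ⟨m, -n, rfl⟩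
    have e2 : ((m : ℤ) : ℂ) + ((-n : ℤ) : ℂ) * τ
        = (((m : ℤ) : ℂ) + ((-n - 1 : ℤ) : ℂ) * τ) + τ := e
    have hlat' : ((m : ℤ) : ℂ) + ((-n - 1 : ℤ) : ℂ) * τ ∈ LatSet τ := ⟨m, -n - 1, rfl⟩
    have := ih m
    rw [e2, deriv_add_tau hθ _ ((hθ.2.2.1 _).mpr hlat')] at this
    exact right_ne_zero_of_mul this

lemma theta_ne_zero {τ : ℂ} {θ : ℂ → ℂ} (hθ : IsTheta τ θ) {z : ℂ}
    (hz : z ∉ LatSet τ) : θ z ≠ 0 := fun h => hz ((hθ.2.2.1 z).mp h)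

/-- Lattice points are separated by `min 1 τ.im`. -/
lemma lat_separation {τ : ℂ} (hτ : 0 < τ.im) {p z : ℂ} (hp : p ∈ LatSet τ)
    (hz : z ∈ LatSet τ) (hne : z ≠ p) : min 1 τ.im ≤ ‖z - p‖ := by
  obtain ⟨m, n, rfl⟩ := hz
  obtain ⟨m', n', rfl⟩ := hp
  have hdiff : ((m : ℂ) + (n : ℂ) * τ) - ((m' : ℂ) + (n' : ℂ) * τ)
      = ((m - m' : ℤ) : ℂ) + ((n - n' : ℤ) : ℂ) * τ := by push_cast; ring
  rw [hdiff]
  set a : ℤ := m - m'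
  set b : ℤ := n - n'
  by_cases hb : b = 0
  · have ha : a ≠ 0 := by
      intro h0
      apply hne
      have : m = m' ∧ n = n' := ⟨by omega, by omega⟩
      rw [this.1, this.2]
    rw [hb]
    simp only [Int.cast_zero, zero_mul, add_zero]
    calc min 1 τ.im ≤ 1 := min_le_left _ _
      _ ≤ ‖((a : ℂ))‖ := by
          rw [Complex.norm_intCast]
          exact_mod_cast Int.one_le_abs ha
  · have him : (((a : ℂ)) + ((b : ℂ)) * τ).im = (b : ℝ) * τ.im := by simp
    calc min 1 τ.im ≤ τ.im := min_le_right _ _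
      _ ≤ |(b : ℝ) * τ.im| := by
          have h1 : (1 : ℝ) ≤ |(b : ℝ)| := by
            rw [← Int.cast_abs]
            exact_mod_cast Int.one_le_abs hb
          rw [abs_mul, abs_of_pos hτ]
          nlinarith
      _ = |(((a : ℂ)) + ((b : ℂ)) * τ).im| := by rw [him]
      _ ≤ ‖_‖ := Complex.abs_im_le_norm _

/-- The lattice is a closed subset of `ℂ`. -/
lemma lat_isClosed {τ : ℂ} (hτ : 0 < τ.im) : IsClosed (LatSet τ) := by
  have hτ' : τ.im ≠ 0 := ne_of_gt hτ
  have hc : Continuous (fun z : ℂ => (z.re - z.im / τ.im * τ.re, z.im / τ.im)) := by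
    fun_prop
  have key : LatSet τ = (fun z : ℂ => (z.re - z.im / τ.im * τ.re, z.im / τ.im)) ⁻¹'
      ((range (Int.cast : ℤ → ℝ)) ×ˢ (range (Int.cast : ℤ → ℝ))) := by
    ext z
    constructor
    · rintro ⟨m, n, rfl⟩
      refine Set.mem_preimage.mpr ⟨⟨m, ?_⟩, ⟨n, ?_⟩⟩
      · show (m : ℝ) = ((m : ℂ) + (n : ℂ) * τ).re - ((m : ℂ) + (n : ℂ) * τ).im / τ.im * τ.re
        simp
        field_simp
        ring
      · show (n : ℝ) = ((m : ℂ) + (n : ℂ) * τ).im / τ.im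
        simp
        field_simp
    · rintro ⟨⟨m, hm⟩, ⟨n, hn⟩⟩
      refine ⟨m, n, ?_⟩
      apply Complex.ext
      · have : z.re - z.im / τ.im * τ.re = (m : ℝ) := hm.symm
        have h2 : z.im / τ.im = (n : ℝ) := hn.symm
        simp only [Complex.add_re, Complex.intCast_re, Complex.mul_re, Complex.intCast_im]
        have : z.re = (m : ℝ) + z.im / τ.im * τ.re := by linarith
        rw [this, h2]
        ring
      · have h2 : z.im / τ.im = (n : ℝ) := hn.symm
        have : z.im = (n : ℝ) * τ.im := by field_simp at h2; linarith
        simp only [Complex.add_im, Complex.intCast_im, Complex.mul_im, Complex.intCast_re]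
        rw [this]
        ring
  rw [key]
  exact ((Int.isClosedEmbedding_coe_real.isClosed_range.prod
    Int.isClosedEmbedding_coe_real.isClosed_range)).preimage hc

open scoped Classical in
/-- The quotient `θ₁/θ₂`, extended over the lattice by the ratio of derivatives. -/
def F (τ : ℂ) (θ₁ θ₂ : ℂ → ℂ) : ℂ → ℂ := fun z =>
  if z ∈ LatSet τ then deriv θ₁ z / deriv θ₂ z else θ₁ z / θ₂ z

lemma F_diff {τ : ℂ} (hτ : 0 < τ.im) {θ₁ θ₂ : ℂ → ℂ} (h₁ : IsTheta τ θ₁)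
    (h₂ : IsTheta τ θ₂) : Differentiable ℂ (F τ θ₁ θ₂) := by
  intro z
  by_cases hz : z ∈ LatSet τ
  · have hd2 : deriv θ₂ z ≠ 0 := deriv_ne_zero_lat h₂ hz
    have hA1 : AnalyticAt ℂ (dslope θ₁ z) z := by
      obtain ⟨p, hp⟩ := h₁.1.analyticAt z
      exact hp.has_fpower_series_dslope_fslope.analyticAt
    have hA2 : AnalyticAt ℂ (dslope θ₂ z) z := by
      obtain ⟨p, hp⟩ := h₂.1.analyticAt z
      exact hp.has_fpower_series_dslope_fslope.analyticAt
    have hG : DifferentiableAt ℂ (fun w => dslope θ₁ z w / dslope θ₂ z w) z :=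
      hA1.differentiableAt.div hA2.differentiableAt (by rw [dslope_same]; exact hd2)
    apply hG.congr_of_eventuallyEq
    filter_upwards [Metric.ball_mem_nhds z (lt_min one_pos hτ)] with w hw
    by_cases hwz : w = z
    · subst hwz
      simp only [F, if_pos hz, dslope_same]
    · have hwL : w ∉ LatSet τ := by
        intro hwL
        have hsep := lat_separation hτ hz hwL hwz
        rw [Metric.mem_ball, Complex.dist_eq] at hw
        exact absurd hw (not_lt.mpr hsep)
      have hsub : w - z ≠ 0 := sub_ne_zero.mpr hwz
      have h1z : θ₁ z = 0 := (h₁.2.2.1 z).mpr hz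
      have h2z : θ₂ z = 0 := (h₂.2.2.1 z).mpr hz
      have hθ2w : θ₂ w ≠ 0 := theta_ne_zero h₂ hwL
      simp only [F, if_neg hwL]
      rw [dslope_of_ne _ hwz, dslope_of_ne _ hwz, slope_def_field, slope_def_field,
        h1z, h2z, sub_zero, sub_zero]
      field_simp
  · have hopen : IsOpen (LatSet τ)ᶜ := (lat_isClosed hτ).isOpen_compl
    have hθ2 : θ₂ z ≠ 0 := theta_ne_zero h₂ hz
    have hG : DifferentiableAt ℂ (fun w => θ₁ w / θ₂ w) z := (h₁.1 z).div (h₂.1 z) hθ2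
    apply hG.congr_of_eventuallyEq
    filter_upwards [hopen.mem_nhds hz] with w hw
    simp only [F, if_neg hw]

lemma F_add_one {τ : ℂ} {θ₁ θ₂ : ℂ → ℂ} (h₁ : IsTheta τ θ₁)
    (h₂ : IsTheta τ θ₂) (z : ℂ) : F τ θ₁ θ₂ (z + 1) = F τ θ₁ θ₂ z := by
  by_cases hz : z ∈ LatSet τ
  · have hz1 : z + 1 ∈ LatSet τ := lat_add_one_iff.mpr hz
    simp only [F, if_pos hz, if_pos hz1, deriv_add_one h₁, deriv_add_one h₂, neg_div_neg_eq]
  · have hz1 : z + 1 ∉ LatSet τ := fun h => hz (lat_add_one_iff.mp h)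
    simp only [F, if_neg hz, if_neg hz1, h₁.2.2.2.1, h₂.2.2.2.1, neg_div_neg_eq]

lemma F_add_tau {τ : ℂ} {θ₁ θ₂ : ℂ → ℂ} (h₁ : IsTheta τ θ₁)
    (h₂ : IsTheta τ θ₂) (z : ℂ) : F τ θ₁ θ₂ (z + τ) = F τ θ₁ θ₂ z := by
  by_cases hz : z ∈ LatSet τ
  · have hz1 : z + τ ∈ LatSet τ := lat_add_tau_iff.mpr hz
    simp only [F, if_pos hz, if_pos hz1]
    rw [deriv_add_tau h₁ z ((h₁.2.2.1 z).mpr hz), deriv_add_tau h₂ z ((h₂.2.2.1 z).mpr hz),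
      mul_div_mul_left _ _ (g_ne_zero τ z)]
  · have hz1 : z + τ ∉ LatSet τ := fun h => hz (lat_add_tau_iff.mp h)
    have hne : -Complex.exp (-((Real.pi : ℂ) * Complex.I * τ)) *
        Complex.exp (-(2 * (Real.pi : ℂ) * Complex.I * z)) ≠ 0 :=
      mul_ne_zero (neg_ne_zero.mpr (Complex.exp_ne_zero _)) (Complex.exp_ne_zero _)
    simp only [F, if_neg hz, if_neg hz1, h₁.2.2.2.2, h₂.2.2.2.2]
    rw [mul_div_mul_left _ _ hne]

lemma F_add_int {τ : ℂ} {θ₁ θ₂ : ℂ → ℂ} (h₁ : IsTheta τ θ₁)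
    (h₂ : IsTheta τ θ₂) (z : ℂ) : ∀ m : ℤ, F τ θ₁ θ₂ (z + (m : ℂ)) = F τ θ₁ θ₂ z := by
  intro m
  induction m using Int.induction_on with
  | zero => simp
  | succ m ih =>
    have e : z + ((m + 1 : ℤ) : ℂ) = (z + ((m : ℤ) : ℂ)) + 1 := by push_cast; ring
    rw [e, F_add_one h₁ h₂, ih]
  | pred m ih =>
    have e : z + ((-(m : ℤ) : ℤ) : ℂ) = (z + ((-(m : ℤ) - 1 : ℤ) : ℂ)) + 1 := by
      push_cast; ring
    rw [e, F_add_one h₁ h₂] at ih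
    exact ih

lemma F_add_int_tau {τ : ℂ} {θ₁ θ₂ : ℂ → ℂ} (h₁ : IsTheta τ θ₁)
    (h₂ : IsTheta τ θ₂) (z : ℂ) : ∀ n : ℤ, F τ θ₁ θ₂ (z + (n : ℂ) * τ) = F τ θ₁ θ₂ z := by
  intro n
  induction n using Int.induction_on with
  | zero => simp
  | succ n ih =>
    have e : z + ((n + 1 : ℤ) : ℂ) * τ = (z + ((n : ℤ) : ℂ) * τ) + τ := by push_cast; ring
    rw [e, F_add_tau h₁ h₂, ih]
  | pred n ih =>
    have e : z + ((-(n : ℤ) : ℤ) : ℂ) * τ = (z + ((-(n : ℤ) - 1 : ℤ) : ℂ) * τ) + τ := by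
      push_cast; ring
    rw [e, F_add_tau h₁ h₂] at ih
    exact ih

lemma F_zero {τ : ℂ} {θ₁ θ₂ : ℂ → ℂ} (h₁ : IsTheta τ θ₁) (h₂ : IsTheta τ θ₂) :
    F τ θ₁ θ₂ 0 = 1 := by
  simp only [F, if_pos (zero_mem_lat τ), h₁.2.1, h₂.2.1, div_one]

end ThetaUnique

/-- Uniqueness of the theta function: two entire functions with derivative `1` at `0`,
zero set exactly `L`, and the quasi-periodicity properties of the paper coincide. -/
theorem theta_unique
    (τ : ℂ) (hτ : 0 < τ.im) (θ₁ θ₂ : ℂ → ℂ)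
    (h₁ : IsTheta τ θ₁) (h₂ : IsTheta τ θ₂) : θ₁ = θ₂ := by
  have hFdiff := ThetaUnique.F_diff hτ h₁ h₂
  have hKc : IsCompact ((fun p : ℝ × ℝ => (p.1 : ℂ) + (p.2 : ℂ) * τ) ''
      (Set.Icc (0:ℝ) 1 ×ˢ Set.Icc (0:ℝ) 1)) :=
    (isCompact_Icc.prod isCompact_Icc).image (by fun_prop)
  obtain ⟨C, hC⟩ := hKc.exists_bound_of_continuousOn hFdiff.continuous.continuousOn
  have hbound : ∀ z, ‖ThetaUnique.F τ θ₁ θ₂ z‖ ≤ C := by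
    intro z
    set y : ℝ := z.im / τ.im with hy
    set x : ℝ := z.re - y * τ.re with hx
    set w : ℂ := ((Int.fract x : ℝ) : ℂ) + ((Int.fract y : ℝ) : ℂ) * τ with hw
    have hwK : w ∈ (fun p : ℝ × ℝ => (p.1 : ℂ) + (p.2 : ℂ) * τ) ''
        (Set.Icc (0:ℝ) 1 ×ˢ Set.Icc (0:ℝ) 1) :=
      ⟨(Int.fract x, Int.fract y),
        ⟨⟨Int.fract_nonneg x, (Int.fract_lt_one x).le⟩,
         ⟨Int.fract_nonneg y, (Int.fract_lt_one y).le⟩⟩, rfl⟩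
    have hz : z = (w + ((⌊x⌋ : ℤ) : ℂ)) + ((⌊y⌋ : ℤ) : ℂ) * τ := by
      have hτ' : τ.im ≠ 0 := ne_of_gt hτ
      apply Complex.ext
      · simp only [hw, Complex.add_re, Complex.ofReal_re, Complex.mul_re,
          Complex.ofReal_im, Complex.intCast_re, Complex.intCast_im, Int.fract]
        rw [hx, hy]
        ring
      · simp only [hw, Complex.add_im, Complex.ofReal_im, Complex.mul_im,
          Complex.ofReal_re, Complex.intCast_im, Complex.intCast_re, Int.fract]
        rw [hy]
        field_simp
        ring
    have hFz : ThetaUnique.F τ θ₁ θ₂ z = ThetaUnique.F τ θ₁ θ₂ w := by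
      rw [hz, ThetaUnique.F_add_int_tau h₁ h₂, ThetaUnique.F_add_int h₁ h₂]
    rw [hFz]
    exact hC w hwK
  have hb : Bornology.IsBounded (Set.range (ThetaUnique.F τ θ₁ θ₂)) := by
    rw [isBounded_iff_forall_norm_le]
    exact ⟨C, by rintro _ ⟨z, rfl⟩; exact hbound z⟩
  have hconst : ∀ z, ThetaUnique.F τ θ₁ θ₂ z = 1 := fun z => by
    rw [hFdiff.apply_eq_apply_of_bounded hb z 0, ThetaUnique.F_zero h₁ h₂]
  funext z
  by_cases hz : z ∈ LatSet τ
  · rw [(h₁.2.2.1 z).mpr hz, (h₂.2.2.1 z).mpr hz]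
  · have h1 := hconst z
    simp only [ThetaUnique.F, if_neg hz] at h1
    exact (div_eq_one_iff_eq (ThetaUnique.theta_ne_zero h₂ hz)).mp h1
end
end
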